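/- arXiv:1801.08915 — 3 statements merged into one kernel-verified Lean document; each statement's English description precedes it below -/
import Mathlib

section
/- (1D Autocorrelation Lemma) Let n ≥ 3 and let c_0, ..., c_{n-2} be positive reals satisfying c_j ≥ c_{j-1} for all 1 ≤ j ≤ (n-2)/2 and c_j = c_{n-2-j} for all 0 ≤ j ≤ (n-2)/2. Define q(x) = Σ_{j=0}^{n-2-x} c_j c_{j+x} for 0 ≤ x ≤ n-2. Then q(x) ≥ q(x+1) for all 0 ≤ x ≤ n-3. -/
/-!
Writing `d j = c (j + 1) - c j`, one has `q x - q (x + 1) = c 0 * c x + ∑_{j < m - x} d j * c (j + x + 1)`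
with `m = n - 2`. The terms with `j < x` are nonnegative because `c` still increases there. On the
remaining window `x ≤ j < m - x`, the reflection `j ↦ m - 1 - j` sends `d j` to `-d j` and
`c (j + x + 1)` to `c (j - x)`, so twice that part of the sum is `∑ d j * (c (j + x + 1) - c (j - x))`.
Both factors compare two values of `c` at indices with the same midpoint `j + 1/2`, so they have the
same sign.
-/

open Finset

/-- `c 0, …, c m` is symmetric about `m / 2` and increases towards it: the hypotheses `a ≤ b` and
`a + b ≤ m` say that `b` is at least as close to `m / 2` as `a`. -/
structure SymmetricUnimodal {α : Type*} [Preorder α] (c : ℕ → α) (m : ℕ) : Prop where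
  symm : ∀ k ≤ m, c k = c (m - k)
  le_of_add_le : ∀ {a b}, a ≤ b → a + b ≤ m → c a ≤ c b

namespace SymmetricUnimodal

section Preorder

variable {α : Type*} [Preorder α] {c : ℕ → α} {m : ℕ}

theorem of_half (hmono : ∀ j, 1 ≤ j → 2 * j ≤ m → c (j - 1) ≤ c j)
    (hsym : ∀ j, 2 * j ≤ m → c j = c (m - j)) : SymmetricUnimodal c m := by
  have hmonoOn : MonotoneOn c (Set.Iic (m / 2)) :=
    monotoneOn_of_le_succ Set.ordConnected_Iic fun a _ _ ha => by
      rw [Order.succ_eq_add_one] at ha ⊢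
      simpa using hmono (a + 1) (by omega) (by rw [Set.mem_Iic] at ha; omega)
  have symm : ∀ k ≤ m, c k = c (m - k) := by
    intro k hk
    rcases le_or_gt (2 * k) m with h | h
    · exact hsym k h
    · have := hsym (m - k) (by omega)
      rwa [Nat.sub_sub_self hk, eq_comm] at this
  refine ⟨symm, fun {a b} hab habm => ?_⟩
  rcases le_or_gt (2 * b) m with hb | hb
  · exact hmonoOn (Set.mem_Iic.2 (by omega)) (Set.mem_Iic.2 (by omega)) hab
  · rw [symm b (by omega)]
    exact hmonoOn (Set.mem_Iic.2 (by omega)) (Set.mem_Iic.2 (by omega)) (by omega)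

theorem le_of_le_add (h : SymmetricUnimodal c m) {a b : ℕ} (hab : a ≤ b) (hb : b ≤ m)
    (habm : m ≤ a + b) : c b ≤ c a := by
  rw [h.symm a (by omega), h.symm b hb]
  exact h.le_of_add_le (by omega) (by omega)

theorem nonneg [Zero α] (h : SymmetricUnimodal c m) (h0 : 0 ≤ c 0) {k : ℕ} (hk : k ≤ m) :
    0 ≤ c k :=
  h0.trans (h.le_of_add_le (Nat.zero_le k) (by omega))

end Preorder

end SymmetricUnimodal

variable {R : Type*} [CommRing R] {c : ℕ → R} {m : ℕ}

def autocorr (c : ℕ → R) (m x : ℕ) : R :=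
  ∑ j ∈ range (m + 1 - x), c j * c (j + x)

theorem autocorr_eq_autocorr_succ_add {x : ℕ} (hx : x ≤ m) :
    autocorr c m x = autocorr c m (x + 1) + c 0 * c x +
      ∑ j ∈ range (m - x), (c (j + 1) - c j) * c (j + x + 1) := by
  rw [autocorr, autocorr, show m + 1 - x = m - x + 1 by omega,
    show m + 1 - (x + 1) = m - x by omega, sum_range_succ', zero_add, add_right_comm,
    ← sum_add_distrib]
  congr 1
  refine sum_congr rfl fun j _ => ?_
  rw [add_right_comm j 1 x, ← add_assoc]
  ring

variable [LinearOrder R] [IsStrictOrderedRing R]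

namespace SymmetricUnimodal

theorem sub_mul_sub_nonneg (h : SymmetricUnimodal c m) {a b a' b' : ℕ} (hab : a ≤ b)
    (hab' : a' ≤ b') (hb : b ≤ m) (hb' : b' ≤ m) (hmid : a + b = a' + b') :
    0 ≤ (c b - c a) * (c b' - c a') := by
  rcases le_total (a + b) m with hle | hge
  · exact mul_nonneg (sub_nonneg.2 (h.le_of_add_le hab hle))
      (sub_nonneg.2 (h.le_of_add_le hab' (by omega)))
  · exact mul_nonneg_of_nonpos_of_nonpos (sub_nonpos.2 (h.le_of_le_add hab hb hge))
      (sub_nonpos.2 (h.le_of_le_add hab' hb' (by omega)))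

theorem sum_Ico_sub_mul_nonneg (h : SymmetricUnimodal c m) (x : ℕ) :
    0 ≤ ∑ j ∈ Ico x (m - x), (c (j + 1) - c j) * c (j + x + 1) := by
  rcases le_or_gt (m - x) x with hle | hlt
  · simp [Ico_eq_empty_of_le hle]
  set f : ℕ → R := fun j => (c (j + 1) - c j) * c (j + x + 1)
  have hreflect : ∑ j ∈ Ico x (m - x), f (m - 1 - j) = ∑ j ∈ Ico x (m - x), f j := by
    rw [sum_Ico_reflect f x (by omega : m - x ≤ m - 1 + 1),
      show m - 1 + 1 - (m - x) = x by omega, show m - 1 + 1 - x = m - x by omega]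
  have hflip : ∀ j ∈ Ico x (m - x), f (m - 1 - j) = -((c (j + 1) - c j) * c (j - x)) := by
    intro j hj
    rw [mem_Ico] at hj
    simp only [f]
    rw [show m - 1 - j + 1 = m - j by omega, show m - 1 - j = m - (j + 1) by omega,
      show m - (j + 1) + x + 1 = m - (j - x) by omega, ← h.symm j (by omega),
      ← h.symm (j + 1) (by omega), ← h.symm (j - x) (by omega)]
    ring
  have hpaired : 0 ≤ ∑ j ∈ Ico x (m - x), (c (j + 1) - c j) * (c (j + x + 1) - c (j - x)) :=
    sum_nonneg fun j hj => by
      rw [mem_Ico] at hj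
      exact h.sub_mul_sub_nonneg (Nat.le_succ j) (by omega) (by omega) (by omega) (by omega)
  rw [sum_congr rfl hflip, sum_neg_distrib] at hreflect
  simp only [mul_sub, sum_sub_distrib] at hpaired
  linarith

theorem sum_range_sub_mul_nonneg (h : SymmetricUnimodal c m) (h0 : 0 ≤ c 0) (x : ℕ) :
    0 ≤ ∑ j ∈ range (m - x), (c (j + 1) - c j) * c (j + x + 1) := by
  have hterm : ∀ j, j + 1 ≤ x → j + x + 1 ≤ m → 0 ≤ (c (j + 1) - c j) * c (j + x + 1) :=
    fun j hjx hjm => mul_nonneg (sub_nonneg.2 (h.le_of_add_le (Nat.le_succ j) (by omega)))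
      (h.nonneg h0 hjm)
  rcases le_total x (m - x) with hx | hx
  · rw [← sum_range_add_sum_Ico _ hx]
    refine add_nonneg (sum_nonneg fun j hj => ?_) (h.sum_Ico_sub_mul_nonneg x)
    have := mem_range.1 hj
    exact hterm j (by omega) (by omega)
  · refine sum_nonneg fun j hj => ?_
    have := mem_range.1 hj
    exact hterm j (by omega) (by omega)

end SymmetricUnimodal

theorem SymmetricUnimodal.antitone_autocorr (h : SymmetricUnimodal c m) (h0 : 0 ≤ c 0) :
    Antitone (autocorr c m) := by
  refine antitone_nat_of_succ_le fun x => ?_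
  rcases le_or_gt x m with hx | hx
  · rw [autocorr_eq_autocorr_succ_add hx, add_assoc, le_add_iff_nonneg_right]
    exact add_nonneg (mul_nonneg h0 (h.nonneg h0 hx)) (h.sum_range_sub_mul_nonneg h0 x)
  · simp [autocorr, show m + 1 - x = 0 by omega, show m + 1 - (x + 1) = 0 by omega]

/-- 1D Autocorrelation Lemma: for positive coefficients `c_0, …, c_{n-2}` that are
non-decreasing up to the midpoint and symmetric about it, the autocorrelation
`q(x) = ∑_{j=0}^{n-2-x} c_j c_{j+x}` satisfies `q(x) ≥ q(x+1)`. -/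
theorem stmt_5 (n : ℕ) (hn : 3 ≤ n) (c : ℕ → ℝ)
    (hpos : ∀ j ≤ n - 2, 0 < c j)
    (hmono : ∀ j, 1 ≤ j → 2 * j ≤ n - 2 → c (j - 1) ≤ c j)
    (hsym : ∀ j, 2 * j ≤ n - 2 → c j = c (n - 2 - j)) :
    ∀ x ≤ n - 3,
      (∑ j ∈ Finset.range (n - 1 - (x + 1)), c j * c (j + (x + 1))) ≤
        ∑ j ∈ Finset.range (n - 1 - x), c j * c (j + x) := by
  intro x _
  have hanti := (SymmetricUnimodal.of_half hmono hsym).antitone_autocorr (hpos 0 (Nat.zero_le _)).le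
  have hstep := hanti (Nat.le_succ x)
  rwa [autocorr, autocorr, show n - 2 + 1 = n - 1 by omega] at hstep
end

section
/- Let n ≥ 4 and φ_n = (1/3)(n-1)(n-2)(n-3). Then with x = √6, the quantity G(n) = (2n³ + 6φ_n)/(2n³(n-1) + √6 n^{3/2} φ_n) satisfies G(n) ≤ 2√6 · n^{-3/2}. -/
/-! Writing `t = √x`, the bound reduces to a polynomial inequality in `t`. Since
`6φ = 2(x-1)(x-2)(x-3)` differs from `2x³` only by `2(6x² - 11x + 6) ≤ 12x(x-1)`, it suffices
that `12 t²(x-1) ≤ 4√6 t³(x-1)`, i.e. `3 ≤ √6 t = √(6x)`, which holds as soon as `x ≥ 3/2`. -/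

open Real

lemma rpow_three_halves_eq_sqrt_pow {x : ℝ} (hx : 0 ≤ x) : x ^ ((3 : ℝ) / 2) = √x ^ 3 := by
  rw [rpow_div_two_eq_sqrt _ hx]
  exact_mod_cast rpow_natCast (√x) 3

lemma rpow_neg_three_halves_eq_inv_sqrt_pow {x : ℝ} (hx : 0 ≤ x) :
    x ^ (-(3 : ℝ) / 2) = (√x ^ 3)⁻¹ := by
  rw [neg_div, rpow_neg hx, rpow_three_halves_eq_sqrt_pow hx]

theorem gap_threshold_le {x : ℝ} (hx : 3 ≤ x) :
    let φ : ℝ := (x - 1) * (x - 2) * (x - 3) / 3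
    (2 * x ^ 3 + 6 * φ) / (2 * x ^ 3 * (x - 1) + √6 * x ^ ((3 : ℝ) / 2) * φ)
      ≤ 2 * √6 * x ^ (-(3 : ℝ) / 2) := by
  intro φ
  have hφ : 0 ≤ φ := by
    have : 0 ≤ (x - 1) * (x - 2) * (x - 3) := by
      apply mul_nonneg (mul_nonneg _ _) <;> linarith
    positivity
  have hx0 : 0 ≤ x := by linarith
  rw [rpow_three_halves_eq_sqrt_pow hx0, rpow_neg_three_halves_eq_inv_sqrt_pow hx0]
  set t := √x with ht
  have ht0 : 0 < t := sqrt_pos.mpr (by linarith)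
  have hxt : x = t ^ 2 := (sq_sqrt hx0).symm
  have h6 : √6 ^ 2 = 6 := sq_sqrt (by norm_num)
  have h3 : 3 ≤ √6 * t := by
    rw [ht, ← sqrt_mul (by norm_num)]
    exact le_sqrt_of_sq_le (by linarith)
  have hden : 0 < 2 * x ^ 3 * (x - 1) + √6 * t ^ 3 * φ := by
    have : 0 < 2 * x ^ 3 * (x - 1) := mul_pos (by positivity) (by linarith)
    positivity
  have hrhs : 2 * √6 * (t ^ 3)⁻¹ * (2 * x ^ 3 * (x - 1) + √6 * t ^ 3 * φ)
      = 4 * √6 * t ^ 3 * (x - 1) + 12 * φ := by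
    rw [hxt]
    field_simp
    linear_combination 2 * φ * h6
  rw [div_le_iff₀ hden, hrhs]
  have hx1 : 0 ≤ x - 1 := by linarith
  calc 2 * x ^ 3 + 6 * φ
      = 2 * (6 * x ^ 2 - 11 * x + 6) + 12 * φ := by ring
    _ ≤ 4 * 3 * t ^ 2 * (x - 1) + 12 * φ := by rw [← hxt]; linarith
    _ ≤ 4 * (√6 * t) * t ^ 2 * (x - 1) + 12 * φ := by gcongr
    _ = 4 * √6 * t ^ 3 * (x - 1) + 12 * φ := by ring

/-- With `x = √6`, the local gap threshold
`G(n) = (2n³ + 6φ_n)/(2n³(n-1) + √6 n^{3/2} φ_n)` satisfies `G(n) ≤ 2√6 n^{-3/2}`. -/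
theorem stmt_9 (n : ℕ) (hn : 4 ≤ n) :
    let φ : ℝ := ((n : ℝ) - 1) * ((n : ℝ) - 2) * ((n : ℝ) - 3) / 3
    (2 * (n : ℝ) ^ 3 + 6 * φ) /
        (2 * (n : ℝ) ^ 3 * ((n : ℝ) - 1) + Real.sqrt 6 * (n : ℝ) ^ ((3 : ℝ) / 2) * φ)
      ≤ 2 * Real.sqrt 6 * (n : ℝ) ^ (-(3 : ℝ) / 2) :=
  gap_threshold_le (by exact_mod_cast hn.trans' (by norm_num))
end

section
/- Let n ≥ 4, b_n = 6n³/((n-1)(n-2)(n-3)), and x_n = -b_n(n-1)/n^{3/2} + sqrt(b_n²(n-1)²/n³ + b_n). Then 0 < x_n ≤ √6. -/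
/-!
Writing `c = b (n-1) / n^{3/2}`, we have `x = -c + √(c² + b)`, which is positive because `b > 0`,
and `x ≤ √6` amounts to `b ≤ 6 + 2√6 c`. Clearing denominators this becomes
`n³ ≤ (n-1)(n-2)(n-3) + 2√6 (n-1) n^{3/2}`, which follows from
`√6 n^{3/2} = n √(6n) ≥ 4n`.
-/

open Real

lemma neg_add_sqrt_sq_add_pos {b : ℝ} (c : ℝ) (hb : 0 < b) : 0 < -c + √(c ^ 2 + b) := by
  have : |c| < √(c ^ 2 + b) := by
    rw [← sqrt_sq_eq_abs]
    exact sqrt_lt_sqrt (sq_nonneg c) (by linarith)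
  linarith [le_abs_self c]

lemma neg_add_sqrt_sq_add_le {b c y : ℝ} (hyc : 0 ≤ y + c) (hb : b ≤ y ^ 2 + 2 * y * c) :
    -c + √(c ^ 2 + b) ≤ y := by
  have : √(c ^ 2 + b) ≤ y + c := (sqrt_le_left hyc).2 (by linarith)
  linarith

lemma rpow_three_halves_sq {n : ℝ} (hn : 0 ≤ n) : (n ^ (3 / 2 : ℝ)) ^ 2 = n ^ 3 := by
  rw [← rpow_natCast, ← rpow_mul hn]
  norm_num

lemma four_mul_le_sqrt_six_mul_rpow_three_halves {n : ℝ} (hn : 8 / 3 ≤ n) :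
    4 * n ≤ √6 * n ^ (3 / 2 : ℝ) := by
  have hn0 : 0 ≤ n := by linarith
  rw [← pow_le_pow_iff_left₀ (by positivity) (by positivity) two_ne_zero, mul_pow, mul_pow,
    sq_sqrt (by norm_num), rpow_three_halves_sq hn0]
  nlinarith

lemma cube_le_sub_one_mul_sub_two_mul_sub_three_add {n : ℝ} (hn : 8 / 3 ≤ n) :
    n ^ 3 ≤ (n - 1) * (n - 2) * (n - 3) + 2 * √6 * (n - 1) * n ^ (3 / 2 : ℝ) := by
  have h := four_mul_le_sqrt_six_mul_rpow_three_halves hn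
  nlinarith [mul_le_mul_of_nonneg_left h (by linarith : (0 : ℝ) ≤ n - 1)]

lemma sub_one_mul_sub_two_mul_sub_three_pos {n : ℝ} (hn : 3 < n) :
    0 < (n - 1) * (n - 2) * (n - 3) :=
  mul_pos (mul_pos (by linarith) (by linarith)) (by linarith)

lemma six_cube_div_le_six_add {n : ℝ} (hn : 3 < n) :
    6 * n ^ 3 / ((n - 1) * (n - 2) * (n - 3)) ≤
      6 + 2 * √6 * (6 * n ^ 3 / ((n - 1) * (n - 2) * (n - 3)) * (n - 1) / n ^ (3 / 2 : ℝ)) := by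
  have hD := sub_one_mul_sub_two_mul_sub_three_pos hn
  have ht : 0 < n ^ (3 / 2 : ℝ) := rpow_pos_of_pos (by linarith) _
  have hsq := rpow_three_halves_sq (n := n) (by linarith)
  have h := cube_le_sub_one_mul_sub_two_mul_sub_three_add (n := n) (by linarith)
  generalize (n - 1) * (n - 2) * (n - 3) = D at hD h ⊢
  have hc : 6 * n ^ 3 / D * (n - 1) / n ^ (3 / 2 : ℝ) = 6 * (n - 1) * n ^ (3 / 2 : ℝ) / D := by
    field_simp
    rw [← hsq]
    ring
  rw [hc, div_le_iff₀ hD]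
  field_simp
  linarith

/-- For `n ≥ 4`, with `b_n = 6n³/((n-1)(n-2)(n-3))` and
`x_n = -b_n(n-1)/n^{3/2} + √(b_n²(n-1)²/n³ + b_n)`, one has `0 < x_n ≤ √6`. -/
theorem stmt_18 (n : ℕ) (hn : 4 ≤ n) :
    let b : ℝ := 6 * (n : ℝ) ^ 3 / (((n : ℝ) - 1) * ((n : ℝ) - 2) * ((n : ℝ) - 3))
    let x : ℝ := -b * ((n : ℝ) - 1) / (n : ℝ) ^ ((3 : ℝ) / 2) +
      Real.sqrt (b ^ 2 * ((n : ℝ) - 1) ^ 2 / (n : ℝ) ^ 3 + b)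
    0 < x ∧ x ≤ Real.sqrt 6 := by
  intro b x
  have hn3 : (3 : ℝ) < n := by exact_mod_cast hn
  have hb : 0 < b := div_pos (by positivity) (sub_one_mul_sub_two_mul_sub_three_pos hn3)
  set c : ℝ := b * (n - 1) / (n : ℝ) ^ (3 / 2 : ℝ)
  have hc : 0 ≤ c := div_nonneg (mul_nonneg hb.le (by linarith)) (by positivity)
  have hx : x = -c + √(c ^ 2 + b) := by
    rw [div_pow, mul_pow, rpow_three_halves_sq (Nat.cast_nonneg n)]
    ring
  rw [hx]
  refine ⟨neg_add_sqrt_sq_add_pos c hb, neg_add_sqrt_sq_add_le (add_nonneg (sqrt_nonneg 6) hc) ?_⟩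
  rw [sq_sqrt (by norm_num)]
  exact six_cube_div_le_six_add hn3
end
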